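/- Set x := 2 + √3, ω := e¹⁴ + e²⁵ + e³⁶, ψ⁺ := −(x²/2)e¹²³ + 2x·e¹²⁶ − 2x·e¹³⁵ − 2x·e¹⁵⁶ + 2x·e²³⁴ + 2x·e²⁴⁶ − 2x·e³⁴⁵ + (4x−8)e⁴⁵⁶ and ψ⁻ := (x/2)e¹²³ − 2e¹⁵⁶ + 2e²⁴⁶ − 2e³⁴⁵ + 4e⁴⁵⁶. Then dψ⁺ = 0 and dψ⁻ = ω ∧ ω, while dω ≠ 0. -/

import Mathlib

/-!
The structure constants of `𝔰𝔲(2) ⊕ 𝔰𝔲(2)` and the signs of the wedge product are integers, so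
`d` and `∧` make sense over any commutative ring and commute with ring homomorphisms. The
parameter `x` only enters as a coefficient: `ψ⁺ = -(x²/2)e¹²³ + (4x-8)e⁴⁵⁶ + 2x β` and
`ψ⁻ = (x/2)e¹²³ + γ` with the integral forms
`β = e¹²⁶ - e¹³⁵ - e¹⁵⁶ + e²³⁴ + e²⁴⁶ - e³⁴⁵` and `γ = -2e¹⁵⁶ + 2e²⁴⁶ - 2e³⁴⁵ + 4e⁴⁵⁶`,
while the volume forms `e¹²³`, `e⁴⁵⁶` of the two factors are closed. So everything reduces to
the integral identities `dβ = 0`, `dγ = ω ∧ ω` and `dω ≠ 0`, which are finite computations.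
-/
open Finset

/-- Model of the exterior algebra of `(ℝ⁶)*`: an element is given by its coefficients
with respect to the basis monomials `e^S = e^{i₁} ∧ … ∧ e^{i_k}`, `S = {i₁ < … < i_k}`. -/
abbrev E : Type := Finset (Fin 6) → ℝ

/-- The wedge product in this model: the sign is the parity of the number of
inversions when merging the (sorted) index sets. -/
noncomputable def wedge (a b : E) : E := fun S =>
  ∑ T ∈ S.powerset,
    (-1 : ℝ) ^ (((T ×ˢ (S \ T)).filter (fun p => p.2 < p.1)).card) * a T * b (S \ T)

/-- The basis monomial `e^S`. -/
def bas (S : Finset (Fin 6)) : E := fun T => if T = S then 1 else 0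

/-- The volume form `vol = e^{123456}`. -/
noncomputable def vol : E := bas Finset.univ

/-- Interior product (contraction) `v ⌟ a` of a vector `v ∈ ℝ⁶` with a form `a`. -/
noncomputable def contr (v : Fin 6 → ℝ) (a : E) : E := fun S =>
  ∑ i : Fin 6,
    if i ∈ S then 0
    else (-1 : ℝ) ^ ((S.filter (fun s => s < i)).card) * v i * a (insert i S)

/-- `a` is a `k`-form, i.e. concentrated in degree `k`. -/
def IsForm (k : ℕ) (a : E) : Prop := ∀ S, S.card ≠ k → a S = 0

/-- The differential on the generators (`0`-indexed): `de¹ = e²³`, `de² = e³¹ = -e¹³`,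
`de³ = e¹²`, `de⁴ = e⁵⁶`, `de⁵ = e⁶⁴ = -e⁴⁶`, `de⁶ = e⁴⁵`
(the structure constants of `𝔰𝔲(2) ⊕ 𝔰𝔲(2)`). -/
noncomputable def dgen : Fin 6 → E := fun i =>
  if i = 0 then bas {1, 2}
  else if i = 1 then -bas {0, 2}
  else if i = 2 then bas {0, 1}
  else if i = 3 then bas {4, 5}
  else if i = 4 then -bas {3, 5}
  else bas {3, 4}

/-- The Chevalley–Eilenberg differential: the unique degree `+1` antiderivation of the
exterior algebra extending `dgen`; on a basis monomial `e^S`, `S = {i₁ < … < i_k}`, it is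
`d(e^S) = ∑ₜ (-1)^{t-1} e^{S \ {i_t}} ∧ d(e^{i_t})`, extended linearly. -/
noncomputable def d (a : E) : E :=
  ∑ S : Finset (Fin 6), ∑ t ∈ S,
    (a S * (-1 : ℝ) ^ ((S.filter (fun s => s < t)).card)) • wedge (bas (S.erase t)) (dgen t)

/-- `x = 2 + √3`. -/
noncomputable def xc : ℝ := 2 + Real.sqrt 3

/-- `ω = e¹⁴ + e²⁵ + e³⁶`. -/
noncomputable def omega12 : E := bas {0, 3} + bas {1, 4} + bas {2, 5}

/-- `ψ⁺ = -(x²/2)e¹²³ + 2x e¹²⁶ - 2x e¹³⁵ - 2x e¹⁵⁶ + 2x e²³⁴ + 2x e²⁴⁶ - 2x e³⁴⁵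
+ (4x-8)e⁴⁵⁶`. -/
noncomputable def psiP12 : E :=
  (-(xc ^ 2 / 2)) • bas {0, 1, 2} + (2 * xc) • bas {0, 1, 5} - (2 * xc) • bas {0, 2, 4}
    - (2 * xc) • bas {0, 4, 5} + (2 * xc) • bas {1, 2, 3} + (2 * xc) • bas {1, 3, 5}
    - (2 * xc) • bas {2, 3, 4} + (4 * xc - 8) • bas {3, 4, 5}

/-- `ψ⁻ = (x/2)e¹²³ - 2e¹⁵⁶ + 2e²⁴⁶ - 2e³⁴⁵ + 4e⁴⁵⁶`. -/
noncomputable def psiM12 : E :=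
  (xc / 2) • bas {0, 1, 2} - (2 : ℝ) • bas {0, 4, 5} + (2 : ℝ) • bas {1, 3, 5}
    - (2 : ℝ) • bas {2, 3, 4} + (4 : ℝ) • bas {3, 4, 5}
section OverRing

variable (R : Type*) [CommRing R]

def wedgeOver (a b : Finset (Fin 6) → R) : Finset (Fin 6) → R := fun S =>
  ∑ T ∈ S.powerset,
    (-1 : R) ^ (((T ×ˢ (S \ T)).filter (fun p => p.2 < p.1)).card) * a T * b (S \ T)

def basOver (S : Finset (Fin 6)) : Finset (Fin 6) → R := fun T => if T = S then 1 else 0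

def dgenOver : Fin 6 → Finset (Fin 6) → R := fun i =>
  if i = 0 then basOver R {1, 2}
  else if i = 1 then -basOver R {0, 2}
  else if i = 2 then basOver R {0, 1}
  else if i = 3 then basOver R {4, 5}
  else if i = 4 then -basOver R {3, 5}
  else basOver R {3, 4}

def dOver (a : Finset (Fin 6) → R) : Finset (Fin 6) → R :=
  ∑ S : Finset (Fin 6), ∑ t ∈ S,
    (a S * (-1 : R) ^ ((S.filter (fun s => s < t)).card)) •
      wedgeOver R (basOver R (S.erase t)) (dgenOver R t)

def dOverLinearMap : (Finset (Fin 6) → R) →ₗ[R] Finset (Fin 6) → R where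
  toFun := dOver R
  map_add' a b := by
    simp only [dOver, Pi.add_apply, add_mul, add_smul, sum_add_distrib]
  map_smul' c a := by
    simp only [dOver, Pi.smul_apply, smul_eq_mul, mul_assoc, mul_smul, smul_sum,
      RingHom.id_apply]

variable {R}

theorem dOver_add (a b : Finset (Fin 6) → R) : dOver R (a + b) = dOver R a + dOver R b :=
  (dOverLinearMap R).map_add a b

theorem dOver_sub (a b : Finset (Fin 6) → R) : dOver R (a - b) = dOver R a - dOver R b :=
  (dOverLinearMap R).map_sub a b

theorem dOver_smul (c : R) (a : Finset (Fin 6) → R) : dOver R (c • a) = c • dOver R a :=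
  (dOverLinearMap R).map_smul c a

theorem dOver_basOver (S : Finset (Fin 6)) :
    dOver R (basOver R S) = ∑ t ∈ S, (-1 : R) ^ ((S.filter (fun s => s < t)).card) •
      wedgeOver R (basOver R (S.erase t)) (dgenOver R t) := by
  rw [dOver, sum_eq_single S]
  · simp [basOver]
  · intro S' _ hS'
    exact sum_eq_zero fun t _ => by simp [basOver, hS']
  · simp

variable {R' : Type*} [CommRing R'] (f : R →+* R')

theorem map_basOver (S : Finset (Fin 6)) : f ∘ basOver R S = basOver R' S := by
  ext T
  simp [basOver, apply_ite f]

theorem map_wedgeOver (a b : Finset (Fin 6) → R) (S : Finset (Fin 6)) :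
    f (wedgeOver R a b S) = wedgeOver R' (f ∘ a) (f ∘ b) S := by
  simp [wedgeOver, map_sum]

theorem map_dgenOver (i : Fin 6) : f ∘ dgenOver R i = dgenOver R' i := by
  unfold dgenOver
  split_ifs <;> ext T <;> simp [basOver, apply_ite f]

theorem map_dOver (a : Finset (Fin 6) → R) : f ∘ dOver R a = dOver R' (f ∘ a) := by
  ext S
  simp [dOver, Finset.sum_apply, map_sum, map_wedgeOver, map_basOver, map_dgenOver]

end OverRing

-- `bas`, `wedge` and `d` are `basOver ℝ`, `wedgeOver ℝ` and `dOver ℝ` by definition.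
theorem d_add (a b : E) : d (a + b) = d a + d b := dOver_add a b

theorem d_smul (c : ℝ) (a : E) : d (c • a) = c • d a := dOver_smul c a

abbrev castForm : (Finset (Fin 6) → ℤ) →+* E := (Int.castRingHom ℝ).compLeft _

theorem castForm_injective : Function.Injective castForm :=
  fun _ _ h => funext fun S => Int.cast_injective (congrFun h S)

theorem bas_eq_castForm (S : Finset (Fin 6)) : bas S = castForm (basOver ℤ S) :=
  (map_basOver (Int.castRingHom ℝ) S).symm

theorem d_castForm (a : Finset (Fin 6) → ℤ) : d (castForm a) = castForm (dOver ℤ a) :=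
  (map_dOver (Int.castRingHom ℝ) a).symm

theorem wedge_castForm (a b : Finset (Fin 6) → ℤ) :
    wedge (castForm a) (castForm b) = castForm (wedgeOver ℤ a b) :=
  funext fun S => (map_wedgeOver (Int.castRingHom ℝ) a b S).symm

def omega12Int : Finset (Fin 6) → ℤ := basOver ℤ {0, 3} + basOver ℤ {1, 4} + basOver ℤ {2, 5}

def beta12 : Finset (Fin 6) → ℤ :=
  basOver ℤ {0, 1, 5} - basOver ℤ {0, 2, 4} - basOver ℤ {0, 4, 5} + basOver ℤ {1, 2, 3}
    + basOver ℤ {1, 3, 5} - basOver ℤ {2, 3, 4}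

def gamma12 : Finset (Fin 6) → ℤ :=
  (-2 : ℤ) • basOver ℤ {0, 4, 5} + (2 : ℤ) • basOver ℤ {1, 3, 5} - (2 : ℤ) • basOver ℤ {2, 3, 4}
    + (4 : ℤ) • basOver ℤ {3, 4, 5}

-- Expanding `d` on monomials first spares the kernel evaluating `d` on all 64 of them.
theorem dOver_basOver_012 : dOver ℤ (basOver ℤ {0, 1, 2}) = 0 := by
  rw [dOver_basOver]
  decide +kernel

theorem dOver_basOver_345 : dOver ℤ (basOver ℤ {3, 4, 5}) = 0 := by
  rw [dOver_basOver]
  decide +kernel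

theorem dOver_beta12 : dOver ℤ beta12 = 0 := by
  simp only [beta12, dOver_add, dOver_sub, dOver_basOver]
  decide +kernel

theorem dOver_gamma12 : dOver ℤ gamma12 = wedgeOver ℤ omega12Int omega12Int := by
  simp only [gamma12, dOver_add, dOver_sub, dOver_smul, dOver_basOver]
  decide +kernel

theorem dOver_omega12Int_ne_zero : dOver ℤ omega12Int ≠ 0 := by
  simp only [omega12Int, dOver_add, dOver_basOver]
  decide +kernel

theorem omega12_eq : omega12 = castForm omega12Int := by
  simp only [omega12, omega12Int, map_add, bas_eq_castForm]

theorem psiP12_eq : psiP12 = (-(xc ^ 2 / 2)) • castForm (basOver ℤ {0, 1, 2})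
    + (4 * xc - 8) • castForm (basOver ℤ {3, 4, 5}) + (2 * xc) • castForm beta12 := by
  simp only [psiP12, beta12, map_add, map_sub, bas_eq_castForm]
  module

theorem psiM12_eq : psiM12 = (xc / 2) • castForm (basOver ℤ {0, 1, 2}) + castForm gamma12 := by
  simp only [psiM12, gamma12, map_add, map_sub, map_zsmul, bas_eq_castForm]
  module

/-- On `𝔰𝔲(2) ⊕ 𝔰𝔲(2)`: `dψ⁺ = 0` and `dψ⁻ = ω ∧ ω`, while `dω ≠ 0`. -/
theorem stmt_12 : d psiP12 = 0 ∧ d psiM12 = wedge omega12 omega12 ∧ d omega12 ≠ 0 := by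
  refine ⟨?_, ?_, ?_⟩
  · simp only [psiP12_eq, d_add, d_smul, d_castForm, dOver_basOver_012, dOver_basOver_345,
      dOver_beta12, map_zero, smul_zero, add_zero]
  · rw [psiM12_eq, omega12_eq, d_add, d_smul, d_castForm, d_castForm, dOver_basOver_012,
      dOver_gamma12, wedge_castForm, map_zero, smul_zero, zero_add]
  · rw [omega12_eq, d_castForm]
    exact (map_ne_zero_iff _ castForm_injective).mpr dOver_omega12Int_ne_zero
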